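/- For every natural number n ≥ 1, twice the number ℓ(D_n) of covering pairs in the Dyck lattice D_n equals (n−1) times the n-th Catalan number C_n; in other words the Hasse index of D_n is exactly (n−1)/2. -/

import Mathlib

/-- Steps of a (Grand) Dyck path: up `U = (1,1)` and down `D = (1,-1)`. -/
inductive Step : Type
  | U : Step
  | D : Step
  deriving DecidableEq

/-- The height of a path: number of up steps minus number of down steps. -/
def height (w : List Step) : ℤ := (w.count Step.U : ℤ) - (w.count Step.D : ℤ)

/-- A Dyck path of semilength `n`: a word of length `2n` with `n` up steps
(hence `n` down steps) all of whose prefixes have nonnegative height. -/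
def IsDyck (n : ℕ) (w : List Step) : Prop :=
  w.length = 2 * n ∧ w.count Step.U = n ∧ ∀ i : ℕ, 0 ≤ height (w.take i)

/-- A Grand Dyck path of semilength `n`: a word of length `2n` with `n` up steps. -/
def IsGrandDyck (n : ℕ) (w : List Step) : Prop :=
  w.length = 2 * n ∧ w.count Step.U = n

/-- The order on paths: pointwise comparison of the heights after each number of steps. -/
def PathLe (w w' : List Step) : Prop :=
  ∀ i : ℕ, height (w.take i) ≤ height (w'.take i)

/-- Strict order on paths. -/
def PathLt (w w' : List Step) : Prop := PathLe w w' ∧ ¬ PathLe w' w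

/-- `Covers P w w'` : within the class of paths satisfying `P`, the path `w'` covers `w`,
i.e. `w < w'` and no path of the class lies strictly between them. -/
def Covers (P : List Step → Prop) (w w' : List Step) : Prop :=
  P w ∧ P w' ∧ PathLt w w' ∧ ∀ z : List Step, P z → ¬ (PathLt w z ∧ PathLt z w')

/-- Number of occurrences of the factor `xy` in the word `w`. -/
def countFactor (x y : Step) (w : List Step) : ℕ :=
  ((Finset.range w.length).filter
    (fun i => w[i]? = some x ∧ w[i + 1]? = some y)).card

/-- Number of occurrences of the factor `xy` in the word `w` whose starting height
(the height after the first `i` steps, the factor occupying positions `i` and `i+1`,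
`0`-indexed) is at least `1`. -/
def countFactorHigh (x y : Step) (w : List Step) : ℕ :=
  ((Finset.range w.length).filter
    (fun i => w[i]? = some x ∧ w[i + 1]? = some y ∧ 1 ≤ height (w.take i))).card

/-- The number of edges of the Hasse diagram of the Dyck lattice `D_n`,
i.e. the number of covering pairs of Dyck paths of semilength `n`. -/
noncomputable def dyckEdges (n : ℕ) : ℕ :=
  Nat.card {p : List Step × List Step // Covers (IsDyck n) p.1 p.2}

/-!
A Dyck path is covered exactly by the paths obtained from it by turning one valley `DU` into a
peak `UD`, so `ℓ(D_n)` is the total number of valleys of the paths of `D_n`. A nonempty Dyck path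
has one more peak than valleys, and the paths of `D_{m+1}` have `(2m+1) C_m` peaks in total:
deleting a peak `UD` leaves a path of `D_m` together with one of its `2m+1` insertion positions.
Hence `2 ℓ(D_{m+1}) = 2 (2m+1) C_m - 2 C_{m+1} = m C_{m+1}`, by `(m+2) C_{m+1} = 2 (2m+1) C_m`.
-/

open Step

@[simp] lemma height_nil : height [] = 0 := rfl

@[simp] lemma height_U : height [U] = 1 := rfl

@[simp] lemma height_D : height [D] = -1 := rfl

@[simp] lemma height_append (a b : List Step) : height (a ++ b) = height a + height b := by
  simp only [height, List.count_append]
  push_cast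
  ring

lemma count_U_add_count_D (w : List Step) : w.count U + w.count D = w.length := by
  induction w with
  | nil => rfl
  | cons s w ih => cases s <;> simp <;> omega

lemma height_eq_two_mul_count_U_sub_length (w : List Step) :
    height w = 2 * w.count U - w.length := by
  have := count_U_add_count_D w
  simp only [height]
  omega

lemma height_take_succ (w : List Step) (i : ℕ) :
    height (w.take (i + 1)) = height (w.take i) + height w[i]?.toList := by
  rw [List.take_add_one, height_append]

lemma height_take_succ_of_getElem? {w : List Step} {i : ℕ} {s : Step} (h : w[i]? = some s) :
    height (w.take (i + 1)) = height (w.take i) + height [s] := by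
  rw [height_take_succ, h, Option.toList_some]

lemma getElem?_eq_U_or_D {w : List Step} {i : ℕ} (hi : i < w.length) :
    w[i]? = some U ∨ w[i]? = some D := by
  rw [List.getElem?_eq_getElem hi]
  cases w[i] <;> simp

lemma height_take_succ_le (w : List Step) (i : ℕ) :
    height (w.take (i + 1)) ≤ height (w.take i) + 1 := by
  rw [height_take_succ]
  rcases w[i]? with _ | _ | _ <;> simp

lemma height_take_le_succ (w : List Step) (i : ℕ) :
    height (w.take i) ≤ height (w.take (i + 1)) + 1 := by
  rw [height_take_succ]
  rcases w[i]? with _ | _ | _ <;> simp only [Option.toList_none, Option.toList_some, height_nil,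
    height_U, height_D] <;> omega

lemma even_height_take_sub {w z : List Step} (hl : w.length = z.length) (j : ℕ) :
    Even (height (z.take j) - height (w.take j)) := by
  refine ⟨(z.take j).count U - (w.take j).count U, ?_⟩
  simp only [height_eq_two_mul_count_U_sub_length, List.length_take, hl]
  ring

lemma eq_of_pathLe_of_pathLe {w z : List Step} (hl : w.length = z.length)
    (hwz : PathLe w z) (hzw : PathLe z w) : w = z := by
  have heq : ∀ j, height (w.take j) = height (z.take j) := fun j => le_antisymm (hwz j) (hzw j)
  refine List.ext_getElem hl fun i hi hi' => ?_
  have := heq (i + 1)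
  rw [height_take_succ, height_take_succ, heq i, List.getElem?_eq_getElem hi,
    List.getElem?_eq_getElem hi'] at this
  revert this
  cases w[i] <;> cases z[i] <;> simp

lemma IsDyck.height_take_of_length_le {n j : ℕ} {w : List Step} (hw : IsDyck n w)
    (hj : w.length ≤ j) : height (w.take j) = 0 := by
  rw [List.take_of_length_le hj, height_eq_two_mul_count_U_sub_length, hw.1, hw.2.1]
  push_cast
  ring

lemma height_take_append_pair (a b : List Step) (x y : Step) (j : ℕ) :
    height ((a ++ [x, y] ++ b).take j) =
      if j ≤ a.length then height ((a ++ b).take j)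
      else if j = a.length + 1 then height a + height [x]
      else height ((a ++ b).take (j - 2)) + height [x] + height [y] := by
  split_ifs with h1 h2
  · rw [List.append_assoc, List.take_append, List.take_append (l₁ := a),
      Nat.sub_eq_zero_of_le h1]
    simp
  · subst h2
    rw [List.append_assoc, List.take_length_add_append]
    simp
  · have hpair : (a ++ [x, y]).length = a.length + 2 := by
      simp only [List.length_append, List.length_cons, List.length_nil]
    obtain ⟨k, rfl⟩ : ∃ k, j = (a ++ [x, y]).length + k := ⟨j - a.length - 2, by omega⟩
    rw [List.take_length_add_append, show (a ++ [x, y]).length + k - 2 = a.length + k by omega,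
      List.take_length_add_append]
    simp only [height_append, show [x, y] = [x] ++ [y] from rfl]
    ring

lemma take_append_pair_drop {w : List Step} {i : ℕ} {x y : Step}
    (hx : w[i]? = some x) (hy : w[i + 1]? = some y) :
    w.take i ++ [x, y] ++ w.drop (i + 2) = w := by
  obtain ⟨hi, rfl⟩ := List.getElem?_eq_some_iff.mp hy
  rw [List.getElem?_eq_getElem (by omega), Option.some.injEq] at hx
  subst hx
  conv_rhs => rw [← List.take_append_drop i w, List.drop_eq_getElem_cons (by omega),
    List.drop_eq_getElem_cons hi]
  simp

def factorPositions (x y : Step) (w : List Step) : Finset ℕ :=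
  (Finset.range w.length).filter (fun i => w[i]? = some x ∧ w[i + 1]? = some y)

lemma card_factorPositions (x y : Step) (w : List Step) :
    (factorPositions x y w).card = countFactor x y w := rfl

lemma mem_factorPositions {x y : Step} {w : List Step} {i : ℕ} :
    i ∈ factorPositions x y w ↔ w[i]? = some x ∧ w[i + 1]? = some y := by
  simp only [factorPositions, Finset.mem_filter, Finset.mem_range]
  exact ⟨And.right, fun h => ⟨(List.getElem?_eq_some_iff.mp h.1).1, h⟩⟩

lemma take_append_pair_drop_of_mem_factorPositions {x y : Step} {w : List Step} {i : ℕ}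
    (hi : i ∈ factorPositions x y w) : w.take i ++ [x, y] ++ w.drop (i + 2) = w :=
  take_append_pair_drop (mem_factorPositions.mp hi).1 (mem_factorPositions.mp hi).2

lemma length_take_of_mem_factorPositions {x y : Step} {w : List Step} {i : ℕ}
    (hi : i ∈ factorPositions x y w) : (w.take i).length = i :=
  List.length_take_of_le (Finset.mem_range.mp (Finset.mem_filter.mp hi).1).le

def flipValley (w : List Step) (i : ℕ) : List Step :=
  w.take i ++ [U, D] ++ w.drop (i + 2)

section FlipValley

variable {n : ℕ} {w : List Step} {i : ℕ}

lemma length_flipValley (hi : i ∈ factorPositions D U w) :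
    (flipValley w i).length = w.length := by
  conv_rhs => rw [← take_append_pair_drop_of_mem_factorPositions hi]
  simp [flipValley]

lemma count_U_flipValley (hi : i ∈ factorPositions D U w) :
    (flipValley w i).count U = w.count U := by
  conv_rhs => rw [← take_append_pair_drop_of_mem_factorPositions hi]
  simp [flipValley]

lemma height_take_flipValley (hi : i ∈ factorPositions D U w) (j : ℕ) :
    height ((flipValley w i).take j) = height (w.take j) + if j = i + 1 then 2 else 0 := by
  conv_rhs => rw [← take_append_pair_drop_of_mem_factorPositions hi]
  rw [flipValley, height_take_append_pair, height_take_append_pair,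
    length_take_of_mem_factorPositions hi]
  simp only [height_U, height_D]
  split_ifs <;> omega

lemma IsDyck.flipValley (hw : IsDyck n w) (hi : i ∈ factorPositions D U w) :
    IsDyck n (flipValley w i) := by
  refine ⟨(length_flipValley hi).trans hw.1, (count_U_flipValley hi).trans hw.2.1, fun j => ?_⟩
  have := hw.2.2 j
  rw [height_take_flipValley hi]
  split_ifs <;> omega

lemma pathLt_flipValley (hi : i ∈ factorPositions D U w) : PathLt w (flipValley w i) := by
  refine ⟨fun j => ?_, fun hle => ?_⟩
  · rw [height_take_flipValley hi]
    split_ifs <;> omega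
  · have := hle (i + 1)
    rw [height_take_flipValley hi] at this
    simp at this

lemma flipValley_injOn :
    Set.InjOn (flipValley w) (factorPositions D U w) := by
  intro i hi i' hi' h
  have := height_take_flipValley hi (i + 1)
  rw [h, height_take_flipValley hi'] at this
  simpa using this

lemma covers_flipValley (hw : IsDyck n w) (hi : i ∈ factorPositions D U w) :
    Covers (IsDyck n) w (flipValley w i) := by
  refine ⟨hw, hw.flipValley hi, pathLt_flipValley hi, ?_⟩
  rintro z hz ⟨⟨hwz, hzw⟩, hzf, hfz⟩
  have hflip := height_take_flipValley hi
  have hoff : ∀ j ≠ i + 1, height (z.take j) = height (w.take j) := fun j hj =>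
    le_antisymm (by simpa [hflip, hj] using hzf j) (hwz j)
  -- by parity, at `i + 1` the path `z` is either at the height of `w` or two steps above it
  obtain ⟨k, hk⟩ := even_height_take_sub (hz.1.trans hw.1.symm) (i + 1)
  have hlo := hwz (i + 1)
  have hhi := hzf (i + 1)
  rw [hflip, if_pos rfl] at hhi
  by_cases h : height (z.take (i + 1)) = height (w.take (i + 1))
  · refine hzw fun j => ?_
    rcases eq_or_ne j (i + 1) with rfl | hj
    · exact h.le
    · exact (hoff j hj).le
  · refine hfz fun j => ?_
    rw [hflip]
    split_ifs with hj
    · subst hj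
      omega
    · simp [hoff j hj]

end FlipValley

lemma exists_flipValley_le {w w' : List Step} (hl : w.length = w'.length)
    (hend : height w = height w') (hle : PathLe w w') (hne : ¬ PathLe w' w) :
    ∃ i ∈ factorPositions D U w, PathLe (flipValley w i) w' := by
  have htail : ∀ j, w.length ≤ j → height (w.take j) = height (w'.take j) := fun j hj => by
    rwa [List.take_of_length_le hj, List.take_of_length_le (hl ▸ hj)]
  -- among the indices where `w` lies strictly below `w'`, take one where `w` is lowest:
  -- there `w` has a valley
  set S := (Finset.range (w.length + 1)).filter fun j => height (w.take j) < height (w'.take j)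
  have hS : S.Nonempty := by
    obtain ⟨j, hj⟩ := not_forall.mp hne
    refine ⟨j, Finset.mem_filter.mpr ⟨Finset.mem_range.mpr ?_, not_le.mp hj⟩⟩
    by_contra hj'
    exact hj (htail j (by omega)).ge
  obtain ⟨m, hmS, hmin⟩ := S.exists_min_image (fun j => height (w.take j)) hS
  simp only [S, Finset.mem_filter, Finset.mem_range] at hmS hmin
  obtain ⟨i, rfl⟩ : ∃ i, m = i + 1 :=
    Nat.exists_eq_succ_of_ne_zero fun h => by simp [h] at hmS
  have hlen : i + 1 < w.length := by
    by_contra h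
    exact (htail (i + 1) (by omega)).not_lt hmS.2
  have hD : w[i]? = some D := by
    refine (getElem?_eq_U_or_D (by omega)).resolve_left fun hU => ?_
    have hup := height_take_succ_of_getElem? hU
    rw [height_U] at hup
    have := height_take_succ_le w' i
    have := hmin i ⟨by omega, by omega⟩
    omega
  have hU : w[i + 1]? = some U := by
    refine (getElem?_eq_U_or_D hlen).resolve_right fun hD' => ?_
    have hdown := height_take_succ_of_getElem? hD'
    rw [height_D] at hdown
    have := height_take_le_succ w' (i + 1)
    have := hmin (i + 1 + 1) ⟨by omega, by omega⟩
    omega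
  have hi : i ∈ factorPositions D U w := mem_factorPositions.mpr ⟨hD, hU⟩
  obtain ⟨k, hk⟩ := even_height_take_sub hl (i + 1)
  refine ⟨i, hi, fun j => ?_⟩
  rw [height_take_flipValley hi]
  split_ifs with hj
  · subst hj
    omega
  · simpa using hle j

lemma Covers.exists_flipValley {n : ℕ} {w w' : List Step} (h : Covers (IsDyck n) w w') :
    ∃ i ∈ factorPositions D U w, w' = flipValley w i := by
  obtain ⟨hw, hw', ⟨hle, hne⟩, hmin⟩ := h
  have hl : w.length = w'.length := hw.1.trans hw'.1.symm
  have hend : height w = height w' := by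
    rw [height_eq_two_mul_count_U_sub_length, height_eq_two_mul_count_U_sub_length, hl,
      hw.2.1, hw'.2.1]
  obtain ⟨i, hi, hflip_le⟩ := exists_flipValley_le hl hend hle hne
  have hle_flip : PathLe w' (flipValley w i) := by
    by_contra h
    exact hmin _ (hw.flipValley hi) ⟨pathLt_flipValley hi, hflip_le, h⟩
  have hlen : (flipValley w i).length = w'.length := (length_flipValley hi).trans hl
  exact ⟨i, hi, (eq_of_pathLe_of_pathLe hlen hflip_le hle_flip).symm⟩

theorem covers_isDyck_iff {n : ℕ} {w w' : List Step} :
    Covers (IsDyck n) w w' ↔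
      IsDyck n w ∧ ∃ i ∈ factorPositions D U w, w' = flipValley w i := by
  refine ⟨fun h => ⟨h.1, h.exists_flipValley⟩, ?_⟩
  rintro ⟨hw, i, hi, rfl⟩
  exact covers_flipValley hw hi

@[simps]
def Step.toDyckStep : Step ≃ DyckStep where
  toFun
    | U => .U
    | D => .D
  invFun
    | .U => U
    | .D => D
  left_inv s := by cases s <;> rfl
  right_inv s := by cases s <;> rfl

lemma List.count_map_equiv {α β : Type*} [DecidableEq α] [DecidableEq β] (e : α ≃ β)
    (l : List α) (b : β) : (l.map e).count b = l.count (e.symm b) := by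
  simpa using List.count_map_of_injective l e e.injective (e.symm b)

lemma isDyck_iff_count {n : ℕ} {w : List Step} :
    IsDyck n w ↔ w.count U = n ∧ w.count U = w.count D ∧
      ∀ i, (w.take i).count D ≤ (w.take i).count U := by
  have := count_U_add_count_D w
  simp only [IsDyck, height, sub_nonneg, Nat.cast_le]
  constructor
  · rintro ⟨h1, h2, h3⟩
    exact ⟨h2, by omega, h3⟩
  · rintro ⟨h1, h2, h3⟩
    exact ⟨by omega, h1, h3⟩

def isDyckEquivDyckWord (n : ℕ) : {w // IsDyck n w} ≃ {p : DyckWord // p.semilength = n} where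
  toFun w :=
    have hw := isDyck_iff_count.mp w.2
    ⟨⟨w.1.map Step.toDyckStep, by simpa [List.count_map_equiv] using hw.2.1,
      fun i => by simpa [← List.map_take, List.count_map_equiv] using hw.2.2 i⟩,
      by simpa [DyckWord.semilength, List.count_map_equiv] using hw.1⟩
  invFun p := ⟨p.1.toList.map Step.toDyckStep.symm, isDyck_iff_count.mpr
    ⟨by simpa [List.count_map_equiv, DyckWord.semilength] using p.2,
      by simpa [List.count_map_equiv] using p.1.count_U_eq_count_D,
      fun i => by
        simpa [← List.map_take, List.count_map_equiv] using p.1.count_D_le_count_U i⟩⟩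
  left_inv w := Subtype.ext (by simp)
  right_inv p := Subtype.ext (DyckWord.ext (by simp))

lemma card_isDyck (n : ℕ) : Nat.card {w // IsDyck n w} = catalan n := by
  rw [Nat.card_congr (isDyckEquivDyckWord n), Nat.card_eq_fintype_card,
    DyckWord.card_dyckWord_semilength_eq_catalan]

lemma finite_setOf_isDyck (n : ℕ) : {w | IsDyck n w}.Finite :=
  Set.finite_coe_iff.mp (Finite.of_equiv _ (isDyckEquivDyckWord n).symm)

noncomputable def dyckFinset (n : ℕ) : Finset (List Step) := (finite_setOf_isDyck n).toFinset

@[simp] lemma mem_dyckFinset {n : ℕ} {w : List Step} : w ∈ dyckFinset n ↔ IsDyck n w :=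
  (finite_setOf_isDyck n).mem_toFinset

lemma card_dyckFinset (n : ℕ) : (dyckFinset n).card = catalan n := by
  rw [← card_isDyck, ← Nat.card_eq_finsetCard]
  exact Nat.card_congr (Equiv.subtypeEquivRight fun _ => mem_dyckFinset)

lemma dyckEdges_eq_sum_countFactor (n : ℕ) :
    dyckEdges n = ∑ w ∈ dyckFinset n, countFactor D U w := by
  set edges := ((dyckFinset n).sigma (factorPositions D U)).image
    fun x => (x.1, flipValley x.1 x.2)
  have hmem : ∀ p : List Step × List Step, Covers (IsDyck n) p.1 p.2 ↔ p ∈ edges := by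
    rintro ⟨w, w'⟩
    simp [edges, covers_isDyck_iff, eq_comm, and_assoc]
  have hinj : Set.InjOn (fun x : (_ : List Step) × ℕ => (x.1, flipValley x.1 x.2))
      ((dyckFinset n).sigma (factorPositions D U)) := by
    rintro ⟨w, i⟩ hx ⟨w', i'⟩ hx' h
    obtain ⟨rfl, h⟩ := Prod.mk.inj h
    simp only [Finset.coe_sigma, Set.mem_sigma_iff, Finset.mem_coe] at hx hx'
    rw [flipValley_injOn hx.2 hx'.2 h]
  rw [dyckEdges, Nat.card_congr (Equiv.subtypeEquivRight hmem), Nat.card_eq_finsetCard,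
    Finset.card_image_of_injOn hinj, Finset.card_sigma]
  rfl

lemma isDyck_append_peak_iff {m : ℕ} {a b : List Step} :
    IsDyck (m + 1) (a ++ [U, D] ++ b) ↔ IsDyck m (a ++ b) := by
  have hh := height_take_append_pair a b U D
  simp only [height_U, height_D] at hh
  have hlen : (a ++ [U, D] ++ b).length = (a ++ b).length + 2 := by simp; omega
  have hcount : (a ++ [U, D] ++ b).count U = (a ++ b).count U + 1 := by simp; omega
  rw [IsDyck, IsDyck, hlen, hcount]
  constructor
  · rintro ⟨h1, h2, h3⟩
    refine ⟨by omega, by omega, fun j => ?_⟩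
    by_cases hj : j ≤ a.length
    · have := h3 j
      rwa [hh, if_pos hj] at this
    · have := h3 (j + 2)
      rw [hh, if_neg (by omega), if_neg (by omega), Nat.add_sub_cancel] at this
      omega
  · rintro ⟨h1, h2, h3⟩
    refine ⟨by omega, by omega, fun j => ?_⟩
    have ha := h3 a.length
    rw [List.take_left' rfl] at ha
    rw [hh]
    split_ifs
    · exact h3 j
    · omega
    · have := h3 (j - 2)
      omega

lemma sum_countFactor_U_D (m : ℕ) :
    ∑ w ∈ dyckFinset (m + 1), countFactor U D w = catalan m * (2 * m + 1) := by
  simp only [← card_factorPositions]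
  rw [← Finset.card_sigma, ← card_dyckFinset m, ← Finset.card_range (2 * m + 1),
    ← Finset.card_product]
  refine Finset.card_bij' (fun x _ => (x.1.take x.2 ++ x.1.drop (x.2 + 2), x.2))
    (fun y _ => ⟨y.1.take y.2 ++ [U, D] ++ y.1.drop y.2, y.2⟩) ?_ ?_ ?_ ?_
  · rintro ⟨w, i⟩ hx
    obtain ⟨hw, hi⟩ := Finset.mem_sigma.mp hx
    rw [mem_dyckFinset, ← take_append_pair_drop_of_mem_factorPositions hi,
      isDyck_append_peak_iff] at hw
    have hlen := hw.1
    rw [List.length_append, length_take_of_mem_factorPositions hi] at hlen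
    exact Finset.mem_product.mpr ⟨mem_dyckFinset.mpr hw, Finset.mem_range.mpr (by omega)⟩
  · rintro ⟨q, k⟩ hy
    simp only [Finset.mem_product, mem_dyckFinset, Finset.mem_range] at hy
    obtain ⟨hq, hk⟩ := hy
    have hlen : (q.take k).length = k := List.length_take_of_le (by rw [hq.1]; omega)
    simp only [Finset.mem_sigma, mem_dyckFinset, isDyck_append_peak_iff, List.take_append_drop,
      mem_factorPositions]
    refine ⟨hq, ?_, ?_⟩
    · simp [hlen]
    · simp [hlen]
  · rintro ⟨w, i⟩ hx
    have hi := (Finset.mem_sigma.mp hx).2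
    have hlen := length_take_of_mem_factorPositions hi
    simp only [List.take_left' hlen, List.drop_left' hlen,
      take_append_pair_drop_of_mem_factorPositions hi]
  · rintro ⟨q, k⟩ hy
    simp only [Finset.mem_product, mem_dyckFinset, Finset.mem_range] at hy
    have hlen : (q.take k).length = k := List.length_take_of_le (by rw [hy.1.1]; omega)
    have hlen2 : (q.take k ++ [U, D]).length = k + 2 := by simp [hlen]
    simp only [List.append_assoc, List.take_left' hlen]
    rw [← List.append_assoc, List.drop_left' hlen2, List.take_append_drop]

lemma countFactor_cons (x y s : Step) (l : List Step) :
    countFactor x y (s :: l) = (if s = x ∧ l[0]? = some y then 1 else 0) + countFactor x y l := by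
  simp only [countFactor, List.length_cons, Finset.card_filter, Finset.sum_range_succ',
    List.getElem?_cons_zero, List.getElem?_cons_succ, Option.some.injEq]
  ring

lemma countFactor_U_D_add (w : List Step) :
    countFactor U D w + (if w.getLast? = some U then 1 else 0) =
      countFactor D U w + (if w.head? = some U then 1 else 0) := by
  induction w with
  | nil => rfl
  | cons s l ih =>
    cases l with
    | nil => cases s <;> rfl
    | cons t l =>
      simp only [countFactor_cons, List.getLast?_cons_cons, List.head?_cons,
        List.getElem?_cons_zero] at ih ⊢
      cases s <;> cases t <;> simp at ih ⊢ <;> omega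

lemma IsDyck.head?_eq_U {n : ℕ} {w : List Step} (hw : IsDyck n w) (hn : n ≠ 0) :
    w.head? = some U := by
  rw [List.head?_eq_getElem?]
  refine (getElem?_eq_U_or_D (by rw [hw.1]; omega)).resolve_right fun hD => ?_
  have := hw.2.2 1
  rw [height_take_succ_of_getElem? hD] at this
  simp at this

lemma IsDyck.getLast?_eq_D {n : ℕ} {w : List Step} (hw : IsDyck n w) (hn : n ≠ 0) :
    w.getLast? = some D := by
  rw [List.getLast?_eq_getElem?]
  refine (getElem?_eq_U_or_D (by rw [hw.1]; omega)).resolve_left fun hU => ?_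
  have := height_take_succ_of_getElem? hU
  rw [Nat.sub_add_cancel (by rw [hw.1]; omega), hw.height_take_of_length_le le_rfl] at this
  rw [height_U] at this
  have := hw.2.2 (w.length - 1)
  omega

lemma IsDyck.countFactor_U_D {n : ℕ} {w : List Step} (hw : IsDyck n w) (hn : n ≠ 0) :
    countFactor U D w = countFactor D U w + 1 := by
  simpa [hw.head?_eq_U hn, hw.getLast?_eq_D hn] using countFactor_U_D_add w

lemma catalan_pos (n : ℕ) : 0 < catalan n :=
  Nat.pos_of_mul_pos_left ((succ_mul_catalan_eq_centralBinom n).symm ▸ n.centralBinom_pos)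

lemma succ_succ_mul_catalan_succ (n : ℕ) :
    (n + 2) * catalan (n + 1) = 2 * (2 * n + 1) * catalan n := by
  refine Nat.eq_of_mul_eq_mul_left (by omega : 0 < n + 1) ?_
  have h := Nat.succ_mul_centralBinom_succ n
  rw [← succ_mul_catalan_eq_centralBinom, ← succ_mul_catalan_eq_centralBinom] at h
  linear_combination h

/-- For `n ≥ 1`, twice the number of edges of the Hasse diagram of the Dyck lattice `D_n`
equals `(n-1)` times the `n`-th Catalan number; equivalently, the Hasse index of `D_n`
(number of edges divided by number of vertices) is exactly `(n-1)/2`. -/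
theorem dyckEdges_hasse_index (n : ℕ) (hn : 1 ≤ n) :
    2 * dyckEdges n = (n - 1) * catalan n ∧
    (dyckEdges n : ℚ) / (Nat.card {w : List Step // IsDyck n w} : ℚ) = ((n : ℚ) - 1) / 2 := by
  obtain ⟨m, rfl⟩ : ∃ m, n = m + 1 := ⟨n - 1, by omega⟩
  have hpeaks :
      ∑ w ∈ dyckFinset (m + 1), countFactor U D w = dyckEdges (m + 1) + catalan (m + 1) := by
    rw [dyckEdges_eq_sum_countFactor, ← card_dyckFinset, Finset.card_eq_sum_ones,
      ← Finset.sum_add_distrib]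
    exact Finset.sum_congr rfl fun w hw => (mem_dyckFinset.mp hw).countFactor_U_D m.succ_ne_zero
  have hedges : 2 * dyckEdges (m + 1) = m * catalan (m + 1) := by
    linear_combination 2 * sum_countFactor_U_D m - 2 * hpeaks - succ_succ_mul_catalan_succ m
  refine ⟨by simpa using hedges, ?_⟩
  have hC : (catalan (m + 1) : ℚ) ≠ 0 := by exact_mod_cast (catalan_pos _).ne'
  rw [card_isDyck, div_eq_div_iff hC two_ne_zero]
  have hedgesℚ := congrArg (Nat.cast : ℕ → ℚ) hedges
  push_cast at hedgesℚ ⊢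
  linear_combination hedgesℚ
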